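/- arXiv:1509.06357 — 2 statements merged into one kernel-verified Lean document; each statement's English description precedes it below -/
import Mathlib

section
/- (Join rule.) Let k ≥ 1 and let the terminal graph (G,T) be the join of terminal graphs (G₁,T) and (G₂,T). Let (H₁,ℓ₁) = C^c_k(G₁,T) and (H₂,ℓ₂) = C^c_k(G₂,T). Define a labeled graph (H,ℓ) as follows: for every pair of nodes x of H₁ and y of H₂ with ℓ₁(x) = ℓ₂(y), H has a node (x,y) with label ℓ((x,y)) = ℓ₁(x); two distinct nodes (x,y) and (x',y') are adjacent if and only if xx' is an edge of H₁ and yy' is an edge of H₂. Then (H,ℓ) = C^c_k(G,T). Moreover, for every k-coloring γ of G, if x is the node of H₁ whose label component contains the restriction of γ to V(G₁), and y is the node of H₂ whose label component contains the restriction of γ to V(G₂), then (x,y) is the γ-node of C^c_k(G,T). -/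
/-!
A `k`-coloring of `G` is a pair of colorings of `G₁` and `G₂` that agree on `T`, and a
recoloring step changes a single vertex, which lies on one side only unless it is in `T`.
The label-preserving steps (outside `T`) therefore move exactly one side inside its label
component, and conversely such moves of one side glue to moves in `G`: the label component
of `γ` is determined by the pair of label components of its restrictions, and every pair
with equal labels arises by gluing. A step at a vertex of `T` changes both sides at the same
vertex, which gives the edges of the product.
-/

open SimpleGraph

/-- A proper `k`-coloring of a graph. -/
def IsColoring {W : Type*} (G : SimpleGraph W) (k : ℕ) (α : W → Fin k) : Prop :=
  ∀ u v : W, G.Adj u v → α u ≠ α v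

/-- The `k`-color graph `C_k(G)`: nodes are proper `k`-colorings of `G`,
two colorings being adjacent iff they differ on exactly one vertex. -/
def colorGraph {W : Type*} (G : SimpleGraph W) (k : ℕ) :
    SimpleGraph {α : W → Fin k // IsColoring G k α} where
  Adj α β := ∃! w, α.1 w ≠ β.1 w
  symm := by
    constructor
    rintro α β ⟨w, hw, hu⟩
    exact ⟨w, hw.symm, fun u hu' => hu u hu'.symm⟩
  loopless := by
    constructor
    rintro α ⟨w, hw, -⟩
    exact hw rfl

/-- The subgraph of a labeled graph consisting of the edges between
equally labeled nodes. -/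
def sameLabelSub {N L : Type*} (H : SimpleGraph N) (f : N → L) : SimpleGraph N where
  Adj x y := H.Adj x y ∧ f x = f y
  symm := ⟨fun _ _ h => ⟨h.1.symm, h.2.symm⟩⟩
  loopless := ⟨fun x h => H.loopless.irrefl x h.1⟩

/-- The quotient graph obtained from a labeled graph by contracting every
(maximal) connected set of equally labeled nodes (i.e. every label component)
into a single node. -/
def quotGraph {N L : Type*} (H : SimpleGraph N) (f : N → L) :
    SimpleGraph (sameLabelSub H f).ConnectedComponent where
  Adj c d := c ≠ d ∧ ∃ a b, (sameLabelSub H f).connectedComponentMk a = c ∧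
      (sameLabelSub H f).connectedComponentMk b = d ∧ H.Adj a b
  symm := by
    constructor
    rintro c d ⟨hne, a, b, ha, hb, hab⟩
    exact ⟨hne.symm, b, a, hb, ha, hab.symm⟩
  loopless := ⟨fun c h => h.1 rfl⟩

/-- The common label of a label component. -/
def quotLabel {N L : Type*} (H : SimpleGraph N) (f : N → L) :
    (sameLabelSub H f).ConnectedComponent → L :=
  SimpleGraph.ConnectedComponent.lift f (by
    intro v w p hp
    clear hp
    induction p with
    | nil => rfl
    | cons h _ ih => exact (show _ ∧ _ from h).2.trans ih)

/-- The label of a coloring: its restriction to the terminal set `T`. -/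
def csgLabelFun {W : Type*} (G : SimpleGraph W) (k : ℕ) (T : Set W) :
    {α : W → Fin k // IsColoring G k α} → (T → Fin k) :=
  fun α t => α.1 t.1

/-- The node set of the contracted solution graph: the label components. -/
abbrev CSGNode {W : Type*} (G : SimpleGraph W) (k : ℕ) (T : Set W) :=
  (sameLabelSub (colorGraph G k) (csgLabelFun G k T)).ConnectedComponent

/-- The contracted solution graph `C^c_k(G,T)`. -/
def CSG {W : Type*} (G : SimpleGraph W) (k : ℕ) (T : Set W) : SimpleGraph (CSGNode G k T) :=
  quotGraph (colorGraph G k) (csgLabelFun G k T)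

/-- The `γ`-node of the contracted solution graph: the label component containing `γ`. -/
def csgNode {W : Type*} (G : SimpleGraph W) (k : ℕ) (T : Set W)
    (γ : {α : W → Fin k // IsColoring G k α}) : CSGNode G k T :=
  (sameLabelSub (colorGraph G k) (csgLabelFun G k T)).connectedComponentMk γ

/-- The label of a node of the contracted solution graph: the common restriction
to `T` of its colorings. -/
def csgLabel {W : Type*} (G : SimpleGraph W) (k : ℕ) (T : Set W) :
    CSGNode G k T → (T → Fin k) :=
  quotLabel (colorGraph G k) (csgLabelFun G k T)

/-- The restriction of a proper coloring to an induced subgraph. -/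
def restrictColoring {W : Type*} (G : SimpleGraph W) (k : ℕ) (S : Set W)
    (γ : {α : W → Fin k // IsColoring G k α}) :
    {α : S → Fin k // IsColoring (G.induce S) k α} :=
  ⟨fun u => γ.1 u.1, fun u w h => γ.2 u.1 w.1 h⟩

/-- A graph is chordal if it contains no induced cycle of length greater than 3. -/
def Chordal {W : Type*} (G : SimpleGraph W) : Prop :=
  ∀ n : ℕ, 4 ≤ n → IsEmpty (SimpleGraph.cycleGraph n ↪g G)

/-- `S` is a vertex cut: `G - S` is disconnected. -/
def IsVertexCut {W : Type*} (G : SimpleGraph W) (S : Set W) : Prop :=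
  ¬ (G.induce Sᶜ).Preconnected

/-- `G` is `l`-connected. -/
def LConnected {W : Type*} (G : SimpleGraph W) (l : ℕ) : Prop :=
  G.Connected ∧ l + 1 ≤ Nat.card W ∧ ∀ S : Set W, IsVertexCut G S → l ≤ S.ncard

/-- A labeled graph `(H,ℓ)`, whose labels are `k`-colorings of the complete graph
on a vertex (type) `S`, is an `(|S|,k)`-color-complete graph. -/
def IsColorComplete {N S : Type*} (k : ℕ) (H : SimpleGraph N) (ℓ : N → S → Fin k) : Prop :=
  (∀ x, Function.Injective (ℓ x)) ∧
  (∀ f : S → Fin k, Function.Injective f → ∃! x, ℓ x = f) ∧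
  (∀ x y, H.Adj x y ↔ ∃! s, ℓ x s ≠ ℓ y s)

/-- The injective neighborhood property. -/
def INP {N L : Type*} (H : SimpleGraph N) (ℓ : N → L) : Prop :=
  ∀ u v w : N, H.Adj u v → H.Adj u w → v ≠ w → ℓ v ≠ ℓ w

/-- The weight `w(P)` of a walk `P` in a labeled graph: the sum over the vertices `x`
of `P` of the number of colors used by labels of neighbors of `x` in `P` but not by
the label of `x`. -/
noncomputable def walkWeight {N S : Type*} {k : ℕ} {G : SimpleGraph N} (ℓ : N → S → Fin k)
    {a b : N} (P : G.Walk a b) : ℕ :=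
  letI := Classical.decEq N
  ∑ x ∈ P.support.toFinset,
    ((⋃ y ∈ P.toSubgraph.neighborSet x, Set.range (ℓ y)) \ Set.range (ℓ x)).ncard

/-- The terminal set `T`, viewed as a set of vertices of the induced subgraph on `Vi`. -/
def Tsub {V : Type*} (Vi T : Set V) : Set ↥Vi := {u | u.1 ∈ T}

/-- Two nodes of `C^c_k(G₁,T)` and `C^c_k(G₂,T)` have the same label. -/
def joinCompat {V : Type*} (G : SimpleGraph V) (k : ℕ) (T V₁ V₂ : Set V)
    (h1 : T ⊆ V₁) (h2 : T ⊆ V₂)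
    (x : CSGNode (G.induce V₁) k (Tsub V₁ T)) (y : CSGNode (G.induce V₂) k (Tsub V₂ T)) :
    Prop :=
  ∀ (t : V) (ht : t ∈ T),
    csgLabel (G.induce V₁) k (Tsub V₁ T) x ⟨⟨t, h1 ht⟩, ht⟩ =
    csgLabel (G.induce V₂) k (Tsub V₂ T) y ⟨⟨t, h2 ht⟩, ht⟩

/-- The node set of the graph constructed in the join rule: pairs of nodes of
`C^c_k(G₁,T)` and `C^c_k(G₂,T)` with equal labels. -/
def JoinNode {V : Type*} (G : SimpleGraph V) (k : ℕ) (T V₁ V₂ : Set V)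
    (h1 : T ⊆ V₁) (h2 : T ⊆ V₂) :=
  {p : CSGNode (G.induce V₁) k (Tsub V₁ T) × CSGNode (G.induce V₂) k (Tsub V₂ T) //
    joinCompat G k T V₁ V₂ h1 h2 p.1 p.2}

/-- The graph constructed in the join rule: `(x,y)` and `(x',y')` are adjacent iff
`xx'` is an edge of `C^c_k(G₁,T)` and `yy'` is an edge of `C^c_k(G₂,T)`. -/
def joinGraph {V : Type*} (G : SimpleGraph V) (k : ℕ) (T V₁ V₂ : Set V)
    (h1 : T ⊆ V₁) (h2 : T ⊆ V₂) : SimpleGraph (JoinNode G k T V₁ V₂ h1 h2) where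
  Adj p q := (CSG (G.induce V₁) k (Tsub V₁ T)).Adj p.1.1 q.1.1 ∧
      (CSG (G.induce V₂) k (Tsub V₂ T)).Adj p.1.2 q.1.2
  symm := ⟨fun _ _ h => ⟨h.1.symm, h.2.symm⟩⟩
  loopless := ⟨fun p h => (CSG (G.induce V₁) k (Tsub V₁ T)).loopless.irrefl _ h.1⟩

section Restriction

variable {W : Type*} {G : SimpleGraph W} {k : ℕ} {T : Set W}

lemma label_eq_of_reachable {N L : Type*} {H : SimpleGraph N} {f : N → L} {a b : N}
    (h : (sameLabelSub H f).Reachable a b) : f a = f b :=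
  congrArg (quotLabel H f) (ConnectedComponent.sound h)

lemma csgNode_eq_of_adj {γ δ : {f : W → Fin k // IsColoring G k f}}
    (hadj : (colorGraph G k).Adj γ δ) (hlab : ∀ t : T, γ.1 t = δ.1 t) :
    csgNode G k T γ = csgNode G k T δ :=
  ConnectedComponent.sound (Adj.reachable ⟨hadj, funext hlab⟩)

lemma exists_ne_of_csgNode_ne {γ δ : {f : W → Fin k // IsColoring G k f}}
    (hadj : (colorGraph G k).Adj γ δ) (hne : csgNode G k T γ ≠ csgNode G k T δ) :
    ∃ t : T, γ.1 t ≠ δ.1 t := by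
  by_contra! hlab
  exact hne (csgNode_eq_of_adj hadj hlab)

lemma colorGraph_adj_restrict_or_eq {γ δ : {f : W → Fin k // IsColoring G k f}}
    (h : (colorGraph G k).Adj γ δ) (S : Set W) :
    (colorGraph (G.induce S) k).Adj (restrictColoring G k S γ) (restrictColoring G k S δ) ∨
      restrictColoring G k S γ = restrictColoring G k S δ := by
  obtain ⟨w, hw, huniq⟩ := h
  by_cases hwS : w ∈ S
  · exact Or.inl ⟨⟨w, hwS⟩, hw, fun u hu => Subtype.ext (huniq u hu)⟩
  · refine Or.inr (Subtype.ext (funext fun u => ?_))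
    by_contra hu
    exact hwS (huniq u hu ▸ u.2)

lemma reachable_restrictColoring {γ δ : {f : W → Fin k // IsColoring G k f}}
    (h : (sameLabelSub (colorGraph G k) (csgLabelFun G k T)).Reachable γ δ) (S : Set W) :
    (sameLabelSub (colorGraph (G.induce S) k) (csgLabelFun (G.induce S) k (Tsub S T))).Reachable
      (restrictColoring G k S γ) (restrictColoring G k S δ) := by
  rw [reachable_iff_reflTransGen] at h ⊢
  refine Relation.ReflTransGen.lift' _ (fun α β hαβ => (reachable_iff_reflTransGen _ _).1 ?_) _ _ h
  rcases colorGraph_adj_restrict_or_eq hαβ.1 S with hS | hS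
  · exact Adj.reachable ⟨hS, funext fun t => congrFun hαβ.2 ⟨t.1.1, t.2⟩⟩
  · exact hS ▸ Reachable.refl _

variable (T) in
def restrictNode (S : Set W) : CSGNode G k T → CSGNode (G.induce S) k (Tsub S T) :=
  ConnectedComponent.lift (fun γ => csgNode _ k _ (restrictColoring G k S γ))
    fun _ _ p _ => ConnectedComponent.sound (reachable_restrictColoring p.reachable S)

lemma csgLabel_restrictNode (c : CSGNode G k T) {S : Set W} {t : W} (ht : t ∈ T) (htS : t ∈ S) :
    csgLabel (G.induce S) k (Tsub S T) (restrictNode T S c) ⟨⟨t, htS⟩, ht⟩ =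
      csgLabel G k T c ⟨t, ht⟩ := by
  induction c using ConnectedComponent.ind
  rfl

lemma CSG_adj_restrictNode {S : Set W} (hTS : T ⊆ S) {c d : CSGNode G k T}
    (h : (CSG G k T).Adj c d) :
    (CSG (G.induce S) k (Tsub S T)).Adj (restrictNode T S c) (restrictNode T S d) := by
  obtain ⟨hne, γ, δ, rfl, rfl, hadj⟩ := h
  obtain ⟨t, ht⟩ := exists_ne_of_csgNode_ne hadj hne
  have hrestr : restrictColoring G k S γ ≠ restrictColoring G k S δ := fun he =>
    ht (congrFun (congrArg Subtype.val he) ⟨t, hTS t.2⟩)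
  refine ⟨fun he => ht ?_, _, _, rfl, rfl,
    (colorGraph_adj_restrict_or_eq hadj S).resolve_right hrestr⟩
  exact congrFun (congrArg (csgLabel _ k _) he) ⟨⟨t, hTS t.2⟩, t.2⟩

end Restriction

section Glue

variable {W : Type*} {G : SimpleGraph W} {k : ℕ} {A B : Set W}

open Classical in
noncomputable def glueFun (hAB : A ∪ B = Set.univ) (α : A → Fin k) (β : B → Fin k) : W → Fin k :=
  fun v => if h : v ∈ A then α ⟨v, h⟩ else β ⟨v, (Set.eq_univ_iff_forall.1 hAB v).resolve_left h⟩

lemma glueFun_of_mem_left (hAB : A ∪ B = Set.univ) (α : A → Fin k) (β : B → Fin k)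
    {v : W} (hv : v ∈ A) : glueFun hAB α β v = α ⟨v, hv⟩ :=
  dif_pos hv

lemma glueFun_of_mem_right (hAB : A ∪ B = Set.univ) {α : A → Fin k} {β : B → Fin k}
    (hαβ : ∀ v (hA : v ∈ A) (hB : v ∈ B), α ⟨v, hA⟩ = β ⟨v, hB⟩) {v : W} (hv : v ∈ B) :
    glueFun hAB α β v = β ⟨v, hv⟩ := by
  by_cases hvA : v ∈ A
  · exact (dif_pos hvA).trans (hαβ v hvA hv)
  · exact dif_neg hvA

lemma isColoring_glueFun (hAB : A ∪ B = Set.univ)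
    (hedge : ∀ u w : W, G.Adj u w → (u ∈ A ∧ w ∈ A) ∨ (u ∈ B ∧ w ∈ B))
    {α : A → Fin k} {β : B → Fin k} (hα : IsColoring (G.induce A) k α)
    (hβ : IsColoring (G.induce B) k β)
    (hαβ : ∀ v (hA : v ∈ A) (hB : v ∈ B), α ⟨v, hA⟩ = β ⟨v, hB⟩) :
    IsColoring G k (glueFun hAB α β) := by
  intro u w huw
  rcases hedge u w huw with ⟨hu, hw⟩ | ⟨hu, hw⟩
  · rw [glueFun_of_mem_left hAB α β hu, glueFun_of_mem_left hAB α β hw]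
    exact hα ⟨u, hu⟩ ⟨w, hw⟩ huw
  · rw [glueFun_of_mem_right hAB hαβ hu, glueFun_of_mem_right hAB hαβ hw]
    exact hβ ⟨u, hu⟩ ⟨w, hw⟩ huw

noncomputable def glue (hAB : A ∪ B = Set.univ)
    (hedge : ∀ u w : W, G.Adj u w → (u ∈ A ∧ w ∈ A) ∨ (u ∈ B ∧ w ∈ B))
    (α : {f : A → Fin k // IsColoring (G.induce A) k f})
    (β : {f : B → Fin k // IsColoring (G.induce B) k f})
    (hαβ : ∀ v (hA : v ∈ A) (hB : v ∈ B), α.1 ⟨v, hA⟩ = β.1 ⟨v, hB⟩) :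
    {f : W → Fin k // IsColoring G k f} :=
  ⟨glueFun hAB α.1 β.1, isColoring_glueFun hAB hedge α.2 β.2 hαβ⟩

variable (hAB : A ∪ B = Set.univ)
  (hedge : ∀ u w : W, G.Adj u w → (u ∈ A ∧ w ∈ A) ∨ (u ∈ B ∧ w ∈ B))
  (α : {f : A → Fin k // IsColoring (G.induce A) k f})
  (β : {f : B → Fin k // IsColoring (G.induce B) k f})
  (hαβ : ∀ v (hA : v ∈ A) (hB : v ∈ B), α.1 ⟨v, hA⟩ = β.1 ⟨v, hB⟩)

lemma restrictColoring_glue_left : restrictColoring G k A (glue hAB hedge α β hαβ) = α :=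
  Subtype.ext (funext fun u => glueFun_of_mem_left hAB α.1 β.1 u.2)

lemma restrictColoring_glue_right : restrictColoring G k B (glue hAB hedge α β hαβ) = β :=
  Subtype.ext (funext fun u => glueFun_of_mem_right hAB hαβ u.2)

end Glue

section Cover

variable {W : Type*} {G : SimpleGraph W} {k : ℕ} {A B : Set W}
  {γ δ : {f : W → Fin k // IsColoring G k f}}

lemma eq_of_restrictColoring_eq (hAB : A ∪ B = Set.univ)
    (hA : restrictColoring G k A γ = restrictColoring G k A δ)
    (hB : restrictColoring G k B γ = restrictColoring G k B δ) : γ = δ := by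
  refine Subtype.ext (funext fun v => ?_)
  rcases Set.eq_univ_iff_forall.1 hAB v with hv | hv
  · exact congrFun (congrArg Subtype.val hA) ⟨v, hv⟩
  · exact congrFun (congrArg Subtype.val hB) ⟨v, hv⟩

lemma colorGraph_adj_of_restrictColoring (hAB : A ∪ B = Set.univ)
    (hA : (colorGraph (G.induce A) k).Adj (restrictColoring G k A γ) (restrictColoring G k A δ))
    (hB : restrictColoring G k B γ = restrictColoring G k B δ) : (colorGraph G k).Adj γ δ := by
  obtain ⟨w, hw, huniq⟩ := hA
  refine ⟨w.1, hw, fun v hv => ?_⟩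
  rcases Set.eq_univ_iff_forall.1 hAB v with hvA | hvB
  · exact congrArg Subtype.val (huniq ⟨v, hvA⟩ hv)
  · exact absurd (congrFun (congrArg Subtype.val hB) ⟨v, hvB⟩) hv

lemma colorGraph_adj_of_restrictColoring_adj (hAB : A ∪ B = Set.univ)
    (hA : (colorGraph (G.induce A) k).Adj (restrictColoring G k A γ) (restrictColoring G k A δ))
    (hB : (colorGraph (G.induce B) k).Adj (restrictColoring G k B γ) (restrictColoring G k B δ))
    {w : W} (hwA : w ∈ A) (hwB : w ∈ B) (hw : γ.1 w ≠ δ.1 w) : (colorGraph G k).Adj γ δ := by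
  obtain ⟨u, -, hu⟩ := hA
  obtain ⟨u', -, hu'⟩ := hB
  refine ⟨w, hw, fun v hv => ?_⟩
  rcases Set.eq_univ_iff_forall.1 hAB v with hvA | hvB
  · exact congrArg Subtype.val ((hu ⟨v, hvA⟩ hv).trans (hu ⟨w, hwA⟩ hw).symm)
  · exact congrArg Subtype.val ((hu' ⟨v, hvB⟩ hv).trans (hu' ⟨w, hwB⟩ hw).symm)

variable {T : Set W}

lemma sameLabelSub_adj_of_restrictColoring (hAB : A ∪ B = Set.univ)
    (hA : (sameLabelSub (colorGraph (G.induce A) k) (csgLabelFun (G.induce A) k (Tsub A T))).Adj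
      (restrictColoring G k A γ) (restrictColoring G k A δ))
    (hB : restrictColoring G k B γ = restrictColoring G k B δ) :
    (sameLabelSub (colorGraph G k) (csgLabelFun G k T)).Adj γ δ := by
  refine ⟨colorGraph_adj_of_restrictColoring hAB hA.1 hB, funext fun t => ?_⟩
  rcases Set.eq_univ_iff_forall.1 hAB t.1 with htA | htB
  · exact congrFun hA.2 ⟨⟨t.1, htA⟩, t.2⟩
  · exact congrFun (congrArg Subtype.val hB) ⟨t.1, htB⟩

/-- Each step of the walk on `A` is glued to the fixed colors on `B`; this is possible
because `A ∩ B ⊆ T` and the colors on `T` do not change along the walk. -/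
lemma reachable_of_restrictColoring (hAB : A ∪ B = Set.univ) (hABT : A ∩ B ⊆ T)
    (hedge : ∀ u w : W, G.Adj u w → (u ∈ A ∧ w ∈ A) ∨ (u ∈ B ∧ w ∈ B))
    (hA : (sameLabelSub (colorGraph (G.induce A) k)
      (csgLabelFun (G.induce A) k (Tsub A T))).Reachable
        (restrictColoring G k A γ) (restrictColoring G k A δ))
    (hB : restrictColoring G k B γ = restrictColoring G k B δ) :
    (sameLabelSub (colorGraph G k) (csgLabelFun G k T)).Reachable γ δ := by
  obtain ⟨p⟩ := hA
  generalize hα : restrictColoring G k A γ = α at p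
  generalize hα' : restrictColoring G k A δ = α' at p
  induction p generalizing γ with
  | nil => exact eq_of_restrictColoring_eq hAB (hα.trans hα'.symm) hB ▸ Reachable.refl _
  | cons hstep _ ih =>
    subst hα
    have hagree : ∀ v (hvA : v ∈ A) (hvB : v ∈ B), _ = (restrictColoring G k B γ).1 ⟨v, hvB⟩ :=
      fun v hvA _ => (congrFun hstep.2 ⟨⟨v, hvA⟩, hABT ⟨hvA, ‹_›⟩⟩).symm
    have hγ'A := restrictColoring_glue_left hAB hedge _ _ hagree
    have hγ'B := restrictColoring_glue_right hAB hedge _ _ hagree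
    refine (Adj.reachable ?_).trans (ih (hγ'B.trans hB) hγ'A hα')
    exact sameLabelSub_adj_of_restrictColoring hAB (by rwa [hγ'A]) hγ'B.symm

end Cover

section Join

variable {V : Type*} {G : SimpleGraph V} {k : ℕ} {T V₁ V₂ : Set V}

def toJoinNode (h1 : T ⊆ V₁) (h2 : T ⊆ V₂) (c : CSGNode G k T) : JoinNode G k T V₁ V₂ h1 h2 :=
  ⟨(restrictNode T V₁ c, restrictNode T V₂ c), fun _ ht =>
    (csgLabel_restrictNode c ht (h1 ht)).trans (csgLabel_restrictNode c ht (h2 ht)).symm⟩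

variable {h1 : T ⊆ V₁} {h2 : T ⊆ V₂}

lemma agree_of_joinCompat {x : CSGNode (G.induce V₁) k (Tsub V₁ T)}
    {y : CSGNode (G.induce V₂) k (Tsub V₂ T)} (hxy : joinCompat G k T V₁ V₂ h1 h2 x y)
    {α : {f : V₁ → Fin k // IsColoring (G.induce V₁) k f}}
    {β : {f : V₂ → Fin k // IsColoring (G.induce V₂) k f}}
    (hα : csgNode _ k _ α = x) (hβ : csgNode _ k _ β = y) (hcap : V₁ ∩ V₂ ⊆ T) :
    ∀ v (hv₁ : v ∈ V₁) (hv₂ : v ∈ V₂), α.1 ⟨v, hv₁⟩ = β.1 ⟨v, hv₂⟩ := by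
  subst hα hβ
  exact fun v hv₁ hv₂ => hxy v (hcap ⟨hv₁, hv₂⟩)

lemma toJoinNode_csgNode_glue (hcup : V₁ ∪ V₂ = Set.univ)
    (hedge : ∀ u w : V, G.Adj u w → (u ∈ V₁ ∧ w ∈ V₁) ∨ (u ∈ V₂ ∧ w ∈ V₂))
    {α : {f : V₁ → Fin k // IsColoring (G.induce V₁) k f}}
    {β : {f : V₂ → Fin k // IsColoring (G.induce V₂) k f}}
    (hαβ : ∀ v (hv₁ : v ∈ V₁) (hv₂ : v ∈ V₂), α.1 ⟨v, hv₁⟩ = β.1 ⟨v, hv₂⟩) :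
    (toJoinNode h1 h2 (csgNode G k T (glue hcup hedge α β hαβ))).1 =
      (csgNode _ k _ α, csgNode _ k _ β) :=
  Prod.ext (congrArg (csgNode _ k _) (restrictColoring_glue_left hcup hedge α β hαβ))
    (congrArg (csgNode _ k _) (restrictColoring_glue_right hcup hedge α β hαβ))

/-- `γ` and `δ` are connected through the coloring that agrees with `δ` on `V₁` and with
`γ` on `V₂`. -/
lemma toJoinNode_injective (hcup : V₁ ∪ V₂ = Set.univ) (hcap : V₁ ∩ V₂ ⊆ T)
    (hedge : ∀ u w : V, G.Adj u w → (u ∈ V₁ ∧ w ∈ V₁) ∨ (u ∈ V₂ ∧ w ∈ V₂)) :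
    Function.Injective (toJoinNode h1 h2 : CSGNode G k T → _) := by
  intro c d h
  induction c, d using ConnectedComponent.ind₂ with | h γ δ => ?_
  have r₁ : (sameLabelSub (colorGraph (G.induce V₁) k)
      (csgLabelFun (G.induce V₁) k (Tsub V₁ T))).Reachable
        (restrictColoring G k V₁ γ) (restrictColoring G k V₁ δ) :=
    ConnectedComponent.exact (congrArg (fun p => p.1.1) h)
  have r₂ : (sameLabelSub (colorGraph (G.induce V₂) k)
      (csgLabelFun (G.induce V₂) k (Tsub V₂ T))).Reachable
        (restrictColoring G k V₂ γ) (restrictColoring G k V₂ δ) :=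
    ConnectedComponent.exact (congrArg (fun p => p.1.2) h)
  have hagree : ∀ v (hv₁ : v ∈ V₁) (hv₂ : v ∈ V₂),
      (restrictColoring G k V₁ δ).1 ⟨v, hv₁⟩ = (restrictColoring G k V₂ γ).1 ⟨v, hv₂⟩ :=
    fun v hv₁ hv₂ => (congrFun (label_eq_of_reachable r₁) ⟨⟨v, hv₁⟩, hcap ⟨hv₁, hv₂⟩⟩).symm
  have hμ₁ := restrictColoring_glue_left hcup hedge _ _ hagree
  have hμ₂ := restrictColoring_glue_right hcup hedge _ _ hagree
  refine ConnectedComponent.sound (Reachable.trans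
    (reachable_of_restrictColoring hcup hcap hedge (by rwa [hμ₁]) hμ₂.symm) ?_)
  exact reachable_of_restrictColoring ((Set.union_comm V₂ V₁).trans hcup)
    ((Set.inter_comm V₂ V₁).trans_subset hcap) (fun u w huw => (hedge u w huw).symm)
    (by rwa [hμ₂]) hμ₁

lemma toJoinNode_surjective (hcup : V₁ ∪ V₂ = Set.univ) (hcap : V₁ ∩ V₂ ⊆ T)
    (hedge : ∀ u w : V, G.Adj u w → (u ∈ V₁ ∧ w ∈ V₁) ∨ (u ∈ V₂ ∧ w ∈ V₂)) :
    Function.Surjective (toJoinNode h1 h2 : CSGNode G k T → _) := by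
  rintro ⟨⟨x, y⟩, hxy⟩
  induction x using ConnectedComponent.ind with | h α => ?_
  induction y using ConnectedComponent.ind with | h β => ?_
  exact ⟨_, Subtype.ext (toJoinNode_csgNode_glue hcup hedge (agree_of_joinCompat hxy rfl rfl hcap))⟩

/-- The edges on both sides differ at the same vertex of `T`, since the two sides agree
on `T`; gluing the endpoints gives an edge of `C_k(G)`. -/
lemma CSG_adj_of_joinGraph_adj (hcup : V₁ ∪ V₂ = Set.univ) (hcap : V₁ ∩ V₂ ⊆ T)
    (hedge : ∀ u w : V, G.Adj u w → (u ∈ V₁ ∧ w ∈ V₁) ∨ (u ∈ V₂ ∧ w ∈ V₂))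
    {c d : CSGNode G k T}
    (h : (joinGraph G k T V₁ V₂ h1 h2).Adj (toJoinNode h1 h2 c) (toJoinNode h1 h2 d)) :
    (CSG G k T).Adj c d := by
  obtain ⟨⟨hne₁, α, α', hα, hα', hadj₁⟩, ⟨-, β, β', hβ, hβ', hadj₂⟩⟩ := h
  obtain ⟨t, ht⟩ := exists_ne_of_csgNode_ne (T := Tsub V₁ T) hadj₁
    fun he => hne₁ (hα.symm.trans (he.trans hα'))
  have hαβ := agree_of_joinCompat (toJoinNode h1 h2 c).2 hα hβ hcap
  have hαβ' := agree_of_joinCompat (toJoinNode h1 h2 d).2 hα' hβ' hcap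
  have hc : csgNode G k T (glue hcup hedge α β hαβ) = c := toJoinNode_injective hcup hcap hedge
    (Subtype.ext ((toJoinNode_csgNode_glue hcup hedge hαβ).trans (Prod.ext hα hβ)))
  have hd : csgNode G k T (glue hcup hedge α' β' hαβ') = d := toJoinNode_injective hcup hcap hedge
    (Subtype.ext ((toJoinNode_csgNode_glue hcup hedge hαβ').trans (Prod.ext hα' hβ')))
  refine ⟨fun hcd => hne₁ (by rw [hcd]), _, _, hc, hd,
    colorGraph_adj_of_restrictColoring_adj hcup ?_ ?_ t.1.2 (h2 t.2) ?_⟩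
  · rwa [restrictColoring_glue_left, restrictColoring_glue_left]
  · rwa [restrictColoring_glue_right, restrictColoring_glue_right]
  · show glueFun hcup α.1 β.1 _ ≠ glueFun hcup α'.1 β'.1 _
    rwa [glueFun_of_mem_left, glueFun_of_mem_left]

noncomputable def joinIso (hcup : V₁ ∪ V₂ = Set.univ) (hcap : V₁ ∩ V₂ ⊆ T)
    (hedge : ∀ u w : V, G.Adj u w → (u ∈ V₁ ∧ w ∈ V₁) ∨ (u ∈ V₂ ∧ w ∈ V₂)) :
    CSG G k T ≃g joinGraph G k T V₁ V₂ h1 h2 where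
  toEquiv := Equiv.ofBijective _
    ⟨toJoinNode_injective hcup hcap hedge, toJoinNode_surjective hcup hcap hedge⟩
  map_rel_iff' := ⟨CSG_adj_of_joinGraph_adj hcup hcap hedge,
    fun h => ⟨CSG_adj_restrictNode h1 h, CSG_adj_restrictNode h2 h⟩⟩

end Join

theorem statement_4_general {V : Type}
    (G : SimpleGraph V) (k : ℕ) (T V₁ V₂ : Set V)
    (h1 : T ⊆ V₁) (h2 : T ⊆ V₂)
    (hcap : V₁ ∩ V₂ = T) (hcup : V₁ ∪ V₂ = Set.univ)
    (hedge : ∀ u w : V, G.Adj u w → (u ∈ V₁ ∧ w ∈ V₁) ∨ (u ∈ V₂ ∧ w ∈ V₂)) :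
    ∃ φ : joinGraph G k T V₁ V₂ h1 h2 ≃g CSG G k T,
      (∀ (p : JoinNode G k T V₁ V₂ h1 h2) (t : V) (ht : t ∈ T),
        csgLabel G k T (φ p) ⟨t, ht⟩ =
          csgLabel (G.induce V₁) k (Tsub V₁ T) p.1.1 ⟨⟨t, h1 ht⟩, ht⟩) ∧
      (∀ (γ : {f : V → Fin k // IsColoring G k f}) (p : JoinNode G k T V₁ V₂ h1 h2),
        p.1.1 = csgNode (G.induce V₁) k (Tsub V₁ T) (restrictColoring G k V₁ γ) →
        p.1.2 = csgNode (G.induce V₂) k (Tsub V₂ T) (restrictColoring G k V₂ γ) →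
        φ p = csgNode G k T γ) := by
  let ψ : CSG G k T ≃g joinGraph G k T V₁ V₂ h1 h2 := joinIso hcup hcap.le hedge
  refine ⟨ψ.symm, fun p t ht => ?_, fun γ p hp₁ hp₂ => ?_⟩
  · conv_rhs => rw [← ψ.apply_symm_apply p]
    exact (csgLabel_restrictNode (ψ.symm p) ht (h1 ht)).symm
  · rw [RelIso.symm_apply_eq]
    exact Subtype.ext (Prod.ext hp₁ hp₂)

/-- Join rule: if `(G,T)` is the join of `(G₁,T)` and `(G₂,T)`, then the
graph constructed in the join rule is (label-preserving isomorphic to) `C^c_k(G,T)`,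
and the node `(x,y)` built from the nodes of the restrictions of `γ` corresponds to
the `γ`-node of `C^c_k(G,T)`. -/
theorem statement_4 {V : Type} [Fintype V] [DecidableEq V]
    (G : SimpleGraph V) (k : ℕ) (hk : 1 ≤ k) (T V₁ V₂ : Set V)
    (h1 : T ⊆ V₁) (h2 : T ⊆ V₂)
    (hcap : V₁ ∩ V₂ = T) (hcup : V₁ ∪ V₂ = Set.univ)
    (hne1 : V₁ ≠ T) (hne2 : V₂ ≠ T)
    (hedge : ∀ u w : V, G.Adj u w → (u ∈ V₁ ∧ w ∈ V₁) ∨ (u ∈ V₂ ∧ w ∈ V₂)) :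
    ∃ φ : joinGraph G k T V₁ V₂ h1 h2 ≃g CSG G k T,
      (∀ (p : JoinNode G k T V₁ V₂ h1 h2) (t : V) (ht : t ∈ T),
        csgLabel G k T (φ p) ⟨t, ht⟩ =
          csgLabel (G.induce V₁) k (Tsub V₁ T) p.1.1 ⟨⟨t, h1 ht⟩, ht⟩) ∧
      (∀ (γ : {f : V → Fin k // IsColoring G k f}) (p : JoinNode G k T V₁ V₂ h1 h2),
        p.1.1 = csgNode (G.induce V₁) k (Tsub V₁ T) (restrictColoring G k V₁ γ) →
        p.1.2 = csgNode (G.induce V₂) k (Tsub V₂ T) (restrictColoring G k V₂ γ) →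
        φ p = csgNode G k T γ) :=
  statement_4_general G k T V₁ V₂ h1 h2 hcap hcup hedge
end

section
/- Let ℓ ≥ 1, let G be an ℓ-connected chordal graph, and let T be a clique of G with T ≠ V(G). (i) If (G,T) can be obtained from (G−v, T∖{v}) by an introduce operation, then |T| ≥ ℓ+1 and G−v is ℓ-connected. (ii) If (G,T) can be obtained from (G₁,T) and (G₂,T) by a join operation, then |T| ≥ ℓ and both G₁ and G₂ are ℓ-connected. -/
/-
Both operations delete from `G` a set of vertices that is attached to the rest of the graph
only through a clique: the vertex `v`, attached through `N(v) ⊆ T`, or `V₂ ∖ T`, attached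
through `T`. A path of `G` that leaves the remaining vertex set `A` enters and exits through
that clique, so it can be shortcut by one edge of the clique; hence every vertex cut of `G[A]`
is a vertex cut of `G`, and `G[A]` inherits the `l`-connectivity of `G` as soon as it has more
than `l` vertices. The bounds on `|T|` come from the vertex cuts `N(v)` and `T` of `G`.
-/

open SimpleGraph

/-- The vertex set of `G - v`. -/
def delSet {V : Type*} (v : V) : Set V := {u | u ≠ v}

/-- The terminal set `T \ {v}`, viewed as a set of vertices of `G - v`. -/
def Tdel {V : Type*} (T : Set V) (v : V) : Set ↥(delSet v) := {u | u.1 ∈ T}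

namespace SimpleGraph

variable {V : Type*} {G : SimpleGraph V}

def innerBoundary (G : SimpleGraph V) (A : Set V) : Set V :=
  {a | a ∈ A ∧ ∃ x, x ∉ A ∧ G.Adj a x}

theorem innerBoundary_delSet_subset (v : V) : innerBoundary G (delSet v) ⊆ G.neighborSet v := by
  rintro a ⟨-, x, hx, hax⟩
  obtain rfl : x = v := not_not.1 hx
  exact hax.symm

theorem innerBoundary_subset_inter {V₁ V₂ : Set V}
    (hsplit : ∀ u w, G.Adj u w → (u ∈ V₁ ∧ w ∈ V₁) ∨ (u ∈ V₂ ∧ w ∈ V₂)) :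
    innerBoundary G V₁ ⊆ V₁ ∩ V₂ := by
  rintro a ⟨ha, x, hx, hax⟩
  exact ⟨ha, ((hsplit a x hax).resolve_left fun h => hx h.2).1⟩

-- The second conjunct strengthens the induction: a walk entering `A` from outside is
-- replaced by its part after the last entry, which starts on the clique `innerBoundary G A`.
theorem Walk.reachable_induce_of_isClique_innerBoundary_aux {A : Set V}
    (hK : G.IsClique (innerBoundary G A)) {a b : V} (p : G.Walk a b) (hb : b ∈ A) :
    (∀ ha : a ∈ A, (G.induce A).Reachable ⟨a, ha⟩ ⟨b, hb⟩) ∧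
      (a ∉ A → ∃ t, ∃ ht : t ∈ innerBoundary G A, (G.induce A).Reachable ⟨t, ht.1⟩ ⟨b, hb⟩) := by
  induction p with
  | nil => exact ⟨fun _ => Reachable.refl _, fun ha => absurd hb ha⟩
  | @cons a c b hac p ih =>
    obtain ⟨ihc, ihc'⟩ := ih hb
    refine ⟨fun ha => ?_, fun ha => ?_⟩
    · by_cases hc : c ∈ A
      · exact (Adj.reachable (G := G.induce A) (u := ⟨a, ha⟩) (v := ⟨c, hc⟩) hac).trans (ihc hc)
      obtain ⟨t, ht, htb⟩ := ihc' hc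
      by_cases hat : a = t
      · subst hat
        exact htb
      have haK : a ∈ innerBoundary G A := ⟨ha, c, hc, hac⟩
      exact (Adj.reachable (G := G.induce A) (u := ⟨a, ha⟩) (v := ⟨t, ht.1⟩)
        (hK haK ht hat)).trans htb
    · by_cases hc : c ∈ A
      · exact ⟨c, ⟨hc, a, ha, hac.symm⟩, ihc hc⟩
      · exact ihc' hc

theorem Reachable.induce_of_isClique_innerBoundary {A : Set V}
    (hK : G.IsClique (innerBoundary G A)) {a b : V} (hab : G.Reachable a b) (ha : a ∈ A)
    (hb : b ∈ A) : (G.induce A).Reachable ⟨a, ha⟩ ⟨b, hb⟩ :=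
  hab.elim fun p => (p.reachable_induce_of_isClique_innerBoundary_aux hK hb).1 ha

theorem isVertexCut_image_val_of_isClique_innerBoundary {A : Set V}
    (hK : G.IsClique (innerBoundary G A)) {S : Set A} (hS : IsVertexCut (G.induce A) S) :
    IsVertexCut G (Subtype.val '' S) := by
  set G' := G.induce (Subtype.val '' S)ᶜ
  have hK' : G'.IsClique (innerBoundary G' (Subtype.val ⁻¹' A)) :=
    fun x hx y hy hxy => hK (x := x.1) (y := y.1) ⟨hx.1, hx.2.elim fun z hz => ⟨z.1, hz⟩⟩
      ⟨hy.1, hy.2.elim fun z hz => ⟨z.1, hz⟩⟩ (Subtype.val_injective.ne hxy)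
  let f : G'.induce (Subtype.val ⁻¹' A) →g (G.induce A).induce Sᶜ :=
    ⟨fun z => ⟨⟨z.1.1, z.2⟩, fun hz => z.1.2 ⟨_, hz, rfl⟩⟩, id⟩
  intro hpre
  refine hS fun x y => ?_
  have hx : x.1.1 ∉ Subtype.val '' S := fun ⟨z, hz, hzx⟩ => x.2 (Subtype.val_injective hzx ▸ hz)
  have hy : y.1.1 ∉ Subtype.val '' S := fun ⟨z, hz, hzy⟩ => y.2 (Subtype.val_injective hzy ▸ hz)
  exact ((hpre ⟨_, hx⟩ ⟨_, hy⟩).induce_of_isClique_innerBoundary hK' x.1.2 y.1.2).map f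

theorem isVertexCut_neighborSet {u v : V} (huv : u ≠ v) (hvu : ¬ G.Adj v u) :
    IsVertexCut G (G.neighborSet v) := by
  intro hpre
  obtain ⟨p⟩ := hpre ⟨v, G.notMem_neighborSet_self⟩ ⟨u, hvu⟩
  cases p with
  | nil => exact huv rfl
  | @cons _ c _ h _ => exact c.2 h

theorem isVertexCut_inter {V₁ V₂ : Set V}
    (hsplit : ∀ u w, G.Adj u w → (u ∈ V₁ ∧ w ∈ V₁) ∨ (u ∈ V₂ ∧ w ∈ V₂)) {a b : V}
    (ha₁ : a ∈ V₁) (ha₂ : a ∉ V₂) (hb₁ : b ∉ V₁) : IsVertexCut G (V₁ ∩ V₂) := by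
  intro hpre
  obtain ⟨p⟩ := hpre ⟨a, fun h => ha₂ h.2⟩ ⟨b, fun h => hb₁ h.1⟩
  obtain ⟨d, -, hd₁, hd₂⟩ := p.exists_boundary_dart (Subtype.val ⁻¹' V₁) ha₁ hb₁
  exact d.fst.2 ⟨hd₁, ((hsplit _ _ d.adj).resolve_left fun h => hd₂ h.2).1⟩

end SimpleGraph

theorem LConnected.induce_of_isClique_innerBoundary {V : Type*} {G : SimpleGraph V} {l : ℕ}
    (hG : LConnected G l) {A : Set V} (hK : G.IsClique (innerBoundary G A))
    (hA : l + 1 ≤ A.ncard) : LConnected (G.induce A) l := by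
  obtain ⟨a, ha⟩ := Set.nonempty_of_ncard_ne_zero (s := A) (by omega)
  have : Nonempty A := ⟨⟨a, ha⟩⟩
  refine ⟨⟨fun x y => (hG.1.preconnected x.1 y.1).induce_of_isClique_innerBoundary hK x.2 y.2⟩,
    hA, fun S hS => ?_⟩
  rw [← Set.ncard_image_of_injective S Subtype.val_injective]
  exact hG.2.2 _ (isVertexCut_image_val_of_isClique_innerBoundary hK hS)

theorem LConnected.induce_delSet {V : Type*} [Finite V] {G : SimpleGraph V} {l : ℕ}
    (hG : LConnected G l) {u v : V} (hN : G.IsClique (G.neighborSet v)) (huv : u ≠ v)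
    (hvu : ¬ G.Adj v u) : LConnected (G.induce (delSet v)) l := by
  refine hG.induce_of_isClique_innerBoundary (hN.subset (innerBoundary_delSet_subset v)) ?_
  have hdeg := hG.2.2 _ (isVertexCut_neighborSet huv hvu)
  have := Set.ncard_le_ncard (Set.insert_subset huv fun x hx => G.ne_of_adj hx |>.symm :
    insert u (G.neighborSet v) ⊆ delSet v)
  rw [Set.ncard_insert_of_notMem (show u ∉ G.neighborSet v from hvu)] at this
  omega

theorem LConnected.induce_of_inter_ssubset {V : Type*} [Finite V] {G : SimpleGraph V} {l : ℕ}
    (hG : LConnected G l) {V₁ V₂ : Set V}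
    (hsplit : ∀ u w, G.Adj u w → (u ∈ V₁ ∧ w ∈ V₁) ∨ (u ∈ V₂ ∧ w ∈ V₂))
    (hK : G.IsClique (V₁ ∩ V₂)) (hl : l ≤ (V₁ ∩ V₂).ncard) (hss : V₁ ∩ V₂ ⊂ V₁) :
    LConnected (G.induce V₁) l := by
  refine hG.induce_of_isClique_innerBoundary (hK.subset (innerBoundary_subset_inter hsplit)) ?_
  have := Set.ncard_lt_ncard hss
  omega

theorem statement_10_general {V : Type} [Fintype V] (G : SimpleGraph V)
    (l : ℕ) (hconn : LConnected G l)
    (T : Set V) (hT : G.IsClique T) (hTne : T ≠ Set.univ) :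
    (∀ v : V, v ∈ T → (∀ u : V, G.Adj v u → u ∈ T) →
      l + 1 ≤ T.ncard ∧ LConnected (G.induce (delSet v)) l) ∧
    (∀ V₁ V₂ : Set V, V₁ ∩ V₂ = T → V₁ ∪ V₂ = Set.univ → V₁ ≠ T → V₂ ≠ T →
      (∀ u w : V, G.Adj u w → (u ∈ V₁ ∧ w ∈ V₁) ∨ (u ∈ V₂ ∧ w ∈ V₂)) →
      l ≤ T.ncard ∧ LConnected (G.induce V₁) l ∧ LConnected (G.induce V₂) l) := by
  refine ⟨fun v hvT hN => ?_, fun V₁ V₂ hI _ h₁ h₂ hsplit => ?_⟩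
  · obtain ⟨u, hu⟩ := (Set.ne_univ_iff_exists_notMem T).1 hTne
    have huv : u ≠ v := fun h => hu (h ▸ hvT)
    have hvu : ¬ G.Adj v u := fun h => hu (hN u h)
    have hdeg := hconn.2.2 _ (isVertexCut_neighborSet huv hvu)
    have := Set.ncard_le_ncard (Set.insert_subset hvT hN : insert v (G.neighborSet v) ⊆ T)
    rw [Set.ncard_insert_of_notMem G.notMem_neighborSet_self] at this
    exact ⟨by omega, hconn.induce_delSet (hT.subset hN) huv hvu⟩
  · subst hI
    have hss₁ : V₁ ∩ V₂ ⊂ V₁ := Set.inter_subset_left.ssubset_of_ne h₁.symm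
    have hss₂ : V₂ ∩ V₁ ⊂ V₂ := Set.inter_comm V₁ V₂ ▸ Set.inter_subset_right.ssubset_of_ne h₂.symm
    obtain ⟨a, ha₁, ha⟩ := Set.exists_of_ssubset hss₁
    obtain ⟨b, hb₂, hb⟩ := Set.exists_of_ssubset hss₂
    have hlT := hconn.2.2 _
      (isVertexCut_inter hsplit ha₁ (fun h => ha ⟨ha₁, h⟩) (fun h => hb ⟨hb₂, h⟩))
    refine ⟨hlT, hconn.induce_of_inter_ssubset hsplit hT hlT hss₁, ?_⟩
    rw [Set.inter_comm] at hT hlT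
    exact hconn.induce_of_inter_ssubset (fun u w h => (hsplit u w h).symm) hT hlT hss₂

/-- for an `l`-connected chordal graph `G` and a clique `T ≠ V(G)`:
(i) if `(G,T)` is obtained from `(G−v, T∖{v})` by an introduce operation, then
`|T| ≥ l+1` and `G−v` is `l`-connected; (ii) if `(G,T)` is obtained from `(G₁,T)` and
`(G₂,T)` by a join operation, then `|T| ≥ l` and `G₁` and `G₂` are `l`-connected. -/
theorem statement_10 {V : Type} [Fintype V] [DecidableEq V] (G : SimpleGraph V)
    (l : ℕ) (hl : 1 ≤ l) (hconn : LConnected G l) (hchord : Chordal G)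
    (T : Set V) (hT : G.IsClique T) (hTne : T ≠ Set.univ) :
    (∀ v : V, v ∈ T → (∀ u : V, G.Adj v u → u ∈ T) →
      l + 1 ≤ T.ncard ∧ LConnected (G.induce (delSet v)) l) ∧
    (∀ V₁ V₂ : Set V, V₁ ∩ V₂ = T → V₁ ∪ V₂ = Set.univ → V₁ ≠ T → V₂ ≠ T →
      (∀ u w : V, G.Adj u w → (u ∈ V₁ ∧ w ∈ V₁) ∨ (u ∈ V₂ ∧ w ∈ V₂)) →
      l ≤ T.ncard ∧ LConnected (G.induce V₁) l ∧ LConnected (G.induce V₂) l) :=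
  statement_10_general G l hconn T hT hTne
end
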